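/- arXiv:2301.04869 — 3 statements merged into one kernel-verified Lean document; each statement's English description precedes it below -/
import Mathlib

section
/- Let $K_{xx} \in \mathbb{R}^{n_x \times n_x}$, $K_{xu} \in \mathbb{R}^{n_x \times n_u}$, $K_{ux} \in \mathbb{R}^{n_u \times n_x}$, $K_{uu} \in \mathbb{R}^{n_u \times n_u}$, $G_x \in \mathbb{R}^{n_x \times n_x}$, $G_u \in \mathbb{R}^{n_x \times n_u}$ be real matrices with $G_x$ invertible, and let $\hat r_1 \in \mathbb{R}^{n_x}$, $\hat r_2 \in \mathbb{R}^{n_u}$, $\hat r_3 \in \mathbb{R}^{n_x}$. Define $Z := \begin{bmatrix} -G_x^{-1} G_u \\ I \end{bmatrix}$ and $\hat K_{uu} := Z^\top \begin{bmatrix} K_{xx} & K_{xu} \\ K_{ux} & K_{uu} \end{bmatrix} Z$. Then vectors $p_x \in \mathbb{R}^{n_x}$, $p_u \in \mathbb{R}^{n_u}$, $p_y \in \mathbb{R}^{n_x}$ satisfy the condensed system $K_{xx} p_x + K_{xu} p_u + G_x^\top p_y = -\hat r_1$, $K_{ux} p_x + K_{uu} p_u + G_u^\top p_y = -\hat r_2$,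 $G_x p_x + G_u p_u = -\hat r_3$ if and only if $\hat K_{uu} \, p_u = -\hat r_2 + G_u^\top G_x^{-\top} \hat r_1 + (K_{ux} - G_u^\top G_x^{-\top} K_{xx}) G_x^{-1} \hat r_3$, $p_x = -G_x^{-1}(\hat r_3 + G_u p_u)$, and $p_y = -G_x^{-\top}(\hat r_1 + K_{xx} p_x + K_{xu} p_u)$. -/
open Matrix

/-- Reduction of the condensed KKT system: eliminating the state variables
via the reduction operator `Z = [-Gx⁻¹ Gu; I]` yields the reduced system
`K̂uu pu = rhs`. -/
theorem reduced_kkt_system {nx nu : ℕ}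
    (Kxx : Matrix (Fin nx) (Fin nx) ℝ)
    (Kxu : Matrix (Fin nx) (Fin nu) ℝ)
    (Kux : Matrix (Fin nu) (Fin nx) ℝ)
    (Kuu : Matrix (Fin nu) (Fin nu) ℝ)
    (Gx : Matrix (Fin nx) (Fin nx) ℝ) (hGx : IsUnit Gx.det)
    (Gu : Matrix (Fin nx) (Fin nu) ℝ)
    (r1 : Fin nx → ℝ) (r2 : Fin nu → ℝ) (r3 : Fin nx → ℝ)
    (Z : Matrix (Fin nx ⊕ Fin nu) (Fin nu) ℝ)
    (hZ : Z = Matrix.fromRows (-(Gx⁻¹ * Gu)) 1)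
    (Kuu_hat : Matrix (Fin nu) (Fin nu) ℝ)
    (hKuu_hat : Kuu_hat = Zᵀ * Matrix.fromBlocks Kxx Kxu Kux Kuu * Z)
    (px : Fin nx → ℝ) (pu : Fin nu → ℝ) (py : Fin nx → ℝ) :
    (Kxx *ᵥ px + Kxu *ᵥ pu + Gxᵀ *ᵥ py = -r1 ∧
      Kux *ᵥ px + Kuu *ᵥ pu + Guᵀ *ᵥ py = -r2 ∧
      Gx *ᵥ px + Gu *ᵥ pu = -r3) ↔
    (Kuu_hat *ᵥ pu
        = -r2 + Guᵀ *ᵥ ((Gx⁻¹)ᵀ *ᵥ r1)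
          + (Kux - Guᵀ * (Gx⁻¹)ᵀ * Kxx) *ᵥ (Gx⁻¹ *ᵥ r3) ∧
      px = -(Gx⁻¹ *ᵥ (r3 + Gu *ᵥ pu)) ∧
      py = -((Gx⁻¹)ᵀ *ᵥ (r1 + Kxx *ᵥ px + Kxu *ᵥ pu))) := by
  have hinv : Gx⁻¹ * Gx = 1 := nonsing_inv_mul Gx hGx
  have hinv' : Gx * Gx⁻¹ = 1 := mul_nonsing_inv Gx hGx
  have hinvT : (Gx⁻¹)ᵀ * Gxᵀ = 1 := by rw [← transpose_mul, hinv', transpose_one]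
  have hinvT' : Gxᵀ * (Gx⁻¹)ᵀ = 1 := by rw [← transpose_mul, hinv, transpose_one]
  have key : ∀ (M N : Matrix (Fin nx) (Fin nx) ℝ), N * M = 1 → M * N = 1 →
      ∀ v w : Fin nx → ℝ, M *ᵥ v = w ↔ v = N *ᵥ w := by
    intro M N h1 h2 v w
    constructor
    · rintro rfl; rw [mulVec_mulVec, h1, one_mulVec]
    · rintro rfl; rw [mulVec_mulVec, h2, one_mulVec]
  have hK : Kuu_hat = Guᵀ * (Gx⁻¹)ᵀ * Kxx * (Gx⁻¹ * Gu) - Guᵀ * (Gx⁻¹)ᵀ * Kxu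
      - Kux * (Gx⁻¹ * Gu) + Kuu := by
    rw [hKuu_hat, hZ, transpose_fromRows, Matrix.mul_assoc, fromBlocks_mul_fromRows,
      fromCols_mul_fromRows, transpose_one, transpose_neg, transpose_mul]
    simp only [Matrix.neg_mul, Matrix.mul_neg, Matrix.mul_add, Matrix.add_mul,
      Matrix.mul_one, Matrix.one_mul, neg_neg, neg_add, Matrix.mul_assoc]
    abel
  have h3iff : (Gx *ᵥ px + Gu *ᵥ pu = -r3) ↔ px = -(Gx⁻¹ *ᵥ (r3 + Gu *ᵥ pu)) := by
    rw [← mulVec_neg, ← key Gx Gx⁻¹ hinv hinv']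
    constructor
    · intro h; rw [eq_sub_of_add_eq h]; abel
    · intro h; rw [h]; abel
  have h1iff : (Kxx *ᵥ px + Kxu *ᵥ pu + Gxᵀ *ᵥ py = -r1) ↔
      py = -((Gx⁻¹)ᵀ *ᵥ (r1 + Kxx *ᵥ px + Kxu *ᵥ pu)) := by
    rw [← mulVec_neg, ← key Gxᵀ (Gx⁻¹)ᵀ hinvT hinvT']
    constructor
    · intro h; rw [eq_sub_of_add_eq' h]; abel
    · intro h; rw [h]; abel
  have h2iff : px = -(Gx⁻¹ *ᵥ (r3 + Gu *ᵥ pu)) →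
      py = -((Gx⁻¹)ᵀ *ᵥ (r1 + Kxx *ᵥ px + Kxu *ᵥ pu)) →
      ((Kux *ᵥ px + Kuu *ᵥ pu + Guᵀ *ᵥ py = -r2) ↔
        Kuu_hat *ᵥ pu = -r2 + Guᵀ *ᵥ ((Gx⁻¹)ᵀ *ᵥ r1)
          + (Kux - Guᵀ * (Gx⁻¹)ᵀ * Kxx) *ᵥ (Gx⁻¹ *ᵥ r3)) := by
    intro hpx hpy
    subst hpx hpy
    rw [← sub_eq_zero, ← sub_eq_zero (b := -r2 + _ + _)]
    constructor <;> intro h <;> rw [← h] <;>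
      simp only [hK, mulVec_add, mulVec_neg, add_mulVec, sub_mulVec, neg_mulVec,
        ← mulVec_mulVec] <;> abel
  constructor
  · rintro ⟨h1, h2, h3⟩
    have hpx := h3iff.mp h3
    have hpy := h1iff.mp h1
    exact ⟨(h2iff hpx hpy).mp h2, hpx, hpy⟩
  · rintro ⟨h2, hpx, hpy⟩
    exact ⟨h1iff.mpr hpy, (h2iff hpx hpy).mpr h2, h3iff.mpr hpx⟩
end

section
/- Let $\iota$ be a finite index type. For each $i \in \iota$, let $K_{x_i x_i}, G_x^i \in \mathbb{R}^{n_x \times n_x}$ with each $G_x^i$ invertible, $K_{x_i u}, G_u^i \in \mathbb{R}^{n_x \times n_u}$, $K_{u x_i} \in \mathbb{R}^{n_u \times n_x}$, and let $K_{uu} \in \mathbb{R}^{n_u \times n_u}$; let $\hat r_1^i, \hat r_3^i \in \mathbb{R}^{n_x}$ and $\hat r_2 \in \mathbb{R}^{n_u}$. Set $G_x := \mathrm{blockdiag}_i(G_x^i)$, $G_u := (G_u^i)_i$ (stacked), $K := \begin{bmatrix} \mathrm{blockdiag}_i(K_{x_i x_i}) & (K_{x_i u})_i \\ (K_{u x_i})_i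 & K_{uu} \end{bmatrix}$, $Z := \begin{bmatrix} -G_x^{-1} G_u \\ I \end{bmatrix}$, and $\hat K_{uu} := Z^\top K Z$. Then vectors $(p_{x_i})_{i}$, $p_u$, $(p_y^i)_i$ satisfy the condensed block-angular system $K_{x_i x_i} p_{x_i} + K_{x_i u} p_u + (G_x^i)^\top p_y^i = -\hat r_1^i$ for all $i$, $\sum_i \big( K_{u x_i} p_{x_i} + (G_u^i)^\top p_y^i \big) + K_{uu} p_u = -\hat r_2$, and $G_x^i p_{x_i} + G_u^i p_u = -\hat r_3^i$ for all $i$, if and only if $\hat K_{uu} \, p_u = -\hat r_2 + \sum_i \big[ (G_u^i)^\top (G_x^i)^{-\top} \hat r_1^i + \big( K_{u x_i} - (G_u^i)^\top (G_x^i)^{-\top} K_{x_i x_i} \big) (G_x^i)^{-1} \hat r_3^i \big]$, $p_{x_i} = -(G_x^i)^{-1}(\hat r_3^i + G_u^i p_u)$ for all $i$, and $p_y^i = -(G_x^i)^{-\top}(\hat r_1^i + K_{x_i x_i} p_{x_i} + K_{x_i u} p_u)$ for all $i$. -/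
/-!
Since `Gxi i` is invertible, the `i`-th constraint determines `px i` from `pu`, and the `i`-th
stationarity equation then determines `py i`. Substituting both into the coupling equation
leaves an equation in `pu` alone, with matrix
`Kuu + ∑ i, (Sᵢᵀ Kxx i Sᵢ - Sᵢᵀ Kxu i - Kux i Sᵢ)` where `Sᵢ = (Gxi i)⁻¹ Gui i`. As `Gx⁻¹ Gu`
is the vertical stack of the `Sᵢ`, multiplying out the blocks of `Zᵀ K Z` gives the same matrix.
-/

open Matrix

namespace Matrix

section Stacking

variable {ι m n p α : Type*}

/-- Rows are indexed by `(row of A i, i)`. -/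
def vstack (A : ι → Matrix m n α) : Matrix (m × ι) n α :=
  of fun q j => A q.2 q.1 j

/-- Columns are indexed by `(column of A i, i)`. -/
def hstack (A : ι → Matrix m n α) : Matrix m (n × ι) α :=
  of fun a q => A q.2 a q.1

theorem transpose_vstack (A : ι → Matrix m n α) : (vstack A)ᵀ = hstack fun i => (A i)ᵀ :=
  rfl

variable {R : Type*} [Fintype ι] [Semiring R]

theorem hstack_mul_vstack [Fintype m] (A : ι → Matrix n m R) (B : ι → Matrix m p R) :
    hstack A * vstack B = ∑ i, A i * B i := by
  ext a c
  simp only [hstack, vstack, mul_apply, sum_apply, of_apply, Fintype.sum_prod_type]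
  exact Finset.sum_comm

theorem blockDiagonal_mul_vstack [Fintype m] [DecidableEq ι]
    (M : ι → Matrix m m R) (N : ι → Matrix m n R) :
    blockDiagonal M * vstack N = vstack fun i => M i * N i := by
  ext ⟨a, i⟩ c
  simp [vstack, mul_apply, blockDiagonal_apply, Fintype.sum_prod_type]

end Stacking

variable {ι m n R : Type*} [Fintype ι] [DecidableEq ι] [Fintype m] [DecidableEq m] [CommRing R]

theorem inv_blockDiagonal {A : ι → Matrix m m R} (hA : ∀ i, IsUnit (A i).det) :
    (blockDiagonal A)⁻¹ = blockDiagonal fun i => (A i)⁻¹ := by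
  refine inv_eq_right_inv ?_
  rw [← blockDiagonal_mul]
  simp only [mul_nonsing_inv _ (hA _)]
  exact blockDiagonal_one

theorem mulVec_eq_iff_eq_inv_mulVec {A : Matrix m m R} (hA : IsUnit A.det) {x b : m → R} :
    A *ᵥ x = b ↔ x = A⁻¹ *ᵥ b := by
  constructor
  · rintro rfl
    rw [mulVec_mulVec, nonsing_inv_mul _ hA, one_mulVec]
  · rintro rfl
    rw [mulVec_mulVec, mul_nonsing_inv _ hA, one_mulVec]

theorem mulVec_add_eq_neg_iff {A : Matrix m m R} (hA : IsUnit A.det) {x b c : m → R} :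
    A *ᵥ x + b = -c ↔ x = -(A⁻¹ *ᵥ (c + b)) := by
  rw [← eq_sub_iff_add_eq, sub_eq_add_neg, ← neg_add, mulVec_eq_iff_eq_inv_mulVec hA, mulVec_neg]

end Matrix

section Scenario

variable {m n R : Type*} [Fintype m] [DecidableEq m] [Fintype n] [CommRing R]
  {G Kxx : Matrix m m R} {Gu Kxu : Matrix m n R} {px py r1 r3 : m → R} {pu : n → R}

theorem scenario_kkt_iff (hG : IsUnit G.det) :
    (Kxx *ᵥ px + Kxu *ᵥ pu + Gᵀ *ᵥ py = -r1 ∧ G *ᵥ px + Gu *ᵥ pu = -r3) ↔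
      (px = -(G⁻¹ *ᵥ (r3 + Gu *ᵥ pu)) ∧ py = -(G⁻¹ᵀ *ᵥ (r1 + Kxx *ᵥ px + Kxu *ᵥ pu))) := by
  have hGt : IsUnit Gᵀ.det := by rwa [det_transpose]
  rw [and_comm, mulVec_add_eq_neg_iff hG, add_comm (Kxx *ᵥ px + Kxu *ᵥ pu),
    mulVec_add_eq_neg_iff hGt, transpose_nonsing_inv, ← add_assoc]

theorem scenario_coupling_eq (Kux : Matrix n m R)
    (hpx : px = -(G⁻¹ *ᵥ (r3 + Gu *ᵥ pu)))
    (hpy : py = -(G⁻¹ᵀ *ᵥ (r1 + Kxx *ᵥ px + Kxu *ᵥ pu))) :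
    Kux *ᵥ px + Guᵀ *ᵥ py =
      ((G⁻¹ * Gu)ᵀ * Kxx * (G⁻¹ * Gu) - (G⁻¹ * Gu)ᵀ * Kxu - Kux * (G⁻¹ * Gu)) *ᵥ pu
        - (Guᵀ *ᵥ (G⁻¹ᵀ *ᵥ r1) + (Kux - Guᵀ * G⁻¹ᵀ * Kxx) *ᵥ (G⁻¹ *ᵥ r3)) := by
  subst hpy hpx
  simp only [mulVec_add, mulVec_neg, sub_mulVec, Matrix.sub_mul, mulVec_mulVec, transpose_mul]
  simp only [Matrix.mul_assoc]
  abel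

end Scenario

theorem reducedMatrix_blockAngular {ι m n R : Type*} [Fintype ι] [DecidableEq ι] [Fintype m]
    [Fintype n] [DecidableEq n] [CommRing R]
    (Kxx : ι → Matrix m m R) (Kxu : ι → Matrix m n R) (Kux : ι → Matrix n m R)
    (Kuu : Matrix n n R) (S : ι → Matrix m n R) :
    (fromRows (-vstack S) (1 : Matrix n n R))ᵀ *
        fromBlocks (blockDiagonal Kxx) (vstack Kxu) (hstack Kux) Kuu *
        fromRows (-vstack S) (1 : Matrix n n R) =
      Kuu + ∑ i, ((S i)ᵀ * Kxx i * S i - (S i)ᵀ * Kxu i - Kux i * S i) := by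
  rw [transpose_fromRows, fromCols_mul_fromBlocks, fromCols_mul_fromRows]
  simp only [transpose_neg, transpose_one, Matrix.neg_mul, Matrix.mul_neg, Matrix.one_mul,
    Matrix.mul_one, Matrix.add_mul, Matrix.mul_assoc, blockDiagonal_mul_vstack,
    transpose_vstack, hstack_mul_vstack, Finset.sum_sub_distrib]
  abel

/-- Reduction of the condensed block-angular KKT system: eliminating the
per-scenario state variables via the reduction operator `Z` yields the
reduced dense system `K̂uu pu = rhs`. -/
theorem reduced_block_angular_kkt_system {ι : Type*} [Fintype ι] [DecidableEq ι]
    {nx nu : ℕ}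
    (Kxx : ι → Matrix (Fin nx) (Fin nx) ℝ)
    (Kxu : ι → Matrix (Fin nx) (Fin nu) ℝ)
    (Kux : ι → Matrix (Fin nu) (Fin nx) ℝ)
    (Kuu : Matrix (Fin nu) (Fin nu) ℝ)
    (Gxi : ι → Matrix (Fin nx) (Fin nx) ℝ) (hGxi : ∀ i, IsUnit (Gxi i).det)
    (Gui : ι → Matrix (Fin nx) (Fin nu) ℝ)
    (r1 : ι → Fin nx → ℝ) (r2 : Fin nu → ℝ) (r3 : ι → Fin nx → ℝ)
    (Gx : Matrix (Fin nx × ι) (Fin nx × ι) ℝ) (hGx : Gx = Matrix.blockDiagonal Gxi)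
    (Gu : Matrix (Fin nx × ι) (Fin nu) ℝ)
    (hGu : Gu = Matrix.of fun p j => Gui p.2 p.1 j)
    (K : Matrix ((Fin nx × ι) ⊕ Fin nu) ((Fin nx × ι) ⊕ Fin nu) ℝ)
    (hK : K = Matrix.fromBlocks
      (Matrix.blockDiagonal Kxx)
      (Matrix.of fun p j => Kxu p.2 p.1 j)
      (Matrix.of fun a p => Kux p.2 a p.1)
      Kuu)
    (Z : Matrix ((Fin nx × ι) ⊕ Fin nu) (Fin nu) ℝ)
    (hZ : Z = Matrix.fromRows (-(Gx⁻¹ * Gu)) 1)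
    (Kuu_hat : Matrix (Fin nu) (Fin nu) ℝ)
    (hKuu_hat : Kuu_hat = Zᵀ * K * Z)
    (px : ι → Fin nx → ℝ) (pu : Fin nu → ℝ) (py : ι → Fin nx → ℝ) :
    ((∀ i, Kxx i *ᵥ px i + Kxu i *ᵥ pu + (Gxi i)ᵀ *ᵥ py i = -r1 i) ∧
      (∑ i, (Kux i *ᵥ px i + (Gui i)ᵀ *ᵥ py i)) + Kuu *ᵥ pu = -r2 ∧
      (∀ i, Gxi i *ᵥ px i + Gui i *ᵥ pu = -r3 i)) ↔
    (Kuu_hat *ᵥ pu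
        = -r2 + ∑ i, ((Gui i)ᵀ *ᵥ (((Gxi i)⁻¹)ᵀ *ᵥ r1 i)
            + (Kux i - (Gui i)ᵀ * ((Gxi i)⁻¹)ᵀ * Kxx i) *ᵥ ((Gxi i)⁻¹ *ᵥ r3 i)) ∧
      (∀ i, px i = -((Gxi i)⁻¹ *ᵥ (r3 i + Gui i *ᵥ pu))) ∧
      (∀ i, py i = -(((Gxi i)⁻¹)ᵀ *ᵥ (r1 i + Kxx i *ᵥ px i + Kxu i *ᵥ pu)))) := by
  set S : ι → Matrix (Fin nx) (Fin nu) ℝ := fun i => (Gxi i)⁻¹ * Gui i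
  have hZS : Z = fromRows (-vstack S) 1 := by
    rw [hZ, hGx, hGu, inv_blockDiagonal hGxi]
    exact congrArg (fun M => fromRows (-M) 1) (blockDiagonal_mul_vstack _ Gui)
  have hKhat : Kuu_hat = Kuu + ∑ i, ((S i)ᵀ * Kxx i * S i - (S i)ᵀ * Kxu i - Kux i * S i) := by
    rw [hKuu_hat, hZS, hK]
    exact reducedMatrix_blockAngular Kxx Kxu Kux Kuu S
  have hcoupling (hpx : ∀ i, px i = -((Gxi i)⁻¹ *ᵥ (r3 i + Gui i *ᵥ pu)))
      (hpy : ∀ i, py i = -(((Gxi i)⁻¹)ᵀ *ᵥ (r1 i + Kxx i *ᵥ px i + Kxu i *ᵥ pu))) :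
      (∑ i, (Kux i *ᵥ px i + (Gui i)ᵀ *ᵥ py i)) + Kuu *ᵥ pu
        = Kuu_hat *ᵥ pu - ∑ i, ((Gui i)ᵀ *ᵥ (((Gxi i)⁻¹)ᵀ *ᵥ r1 i)
            + (Kux i - (Gui i)ᵀ * ((Gxi i)⁻¹)ᵀ * Kxx i) *ᵥ ((Gxi i)⁻¹ *ᵥ r3 i)) := by
    rw [hKhat, add_mulVec, sum_mulVec, add_sub_assoc, ← Finset.sum_sub_distrib, add_comm]
    congr 1
    exact Finset.sum_congr rfl fun i _ => scenario_coupling_eq _ (hpx i) (hpy i)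
  constructor
  · rintro ⟨h1, h2, h3⟩
    have hsol i := (scenario_kkt_iff (hGxi i)).1 ⟨h1 i, h3 i⟩
    refine ⟨?_, fun i => (hsol i).1, fun i => (hsol i).2⟩
    rw [hcoupling (fun i => (hsol i).1) (fun i => (hsol i).2)] at h2
    exact sub_eq_iff_eq_add.mp h2
  · rintro ⟨hreduced, hpx, hpy⟩
    have hsol i := (scenario_kkt_iff (hGxi i)).2 ⟨hpx i, hpy i⟩
    refine ⟨fun i => (hsol i).1, ?_, fun i => (hsol i).2⟩
    rw [hcoupling hpx hpy, hreduced, add_sub_cancel_right]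
end

section
/- Let $W_{xx}, G_x \in \mathbb{R}^{n_x \times n_x}$ with $G_x$ invertible, $W_{xu}, G_u \in \mathbb{R}^{n_x \times n_u}$, $W_{ux} \in \mathbb{R}^{n_u \times n_x}$, $W_{uu}, \Sigma_u \in \mathbb{R}^{n_u \times n_u}$, $\Sigma_x \in \mathbb{R}^{n_x \times n_x}$, $H_x \in \mathbb{R}^{m \times n_x}$, $H_u \in \mathbb{R}^{m \times n_u}$, and let $\Sigma_s \in \mathbb{R}^{m \times m}$ be invertible. Let $r_1^x \in \mathbb{R}^{n_x}$, $r_1^u \in \mathbb{R}^{n_u}$, $r_2, r_4 \in \mathbb{R}^m$, $r_3 \in \mathbb{R}^{n_x}$. Define the condensed blocks $K_{xx} := W_{xx} + \Sigma_x + H_x^\top \Sigma_s H_x$, $K_{xu} := W_{xu} + H_x^\top \Sigma_s H_u$, $K_{ux} := W_{ux} + H_u^\top \Sigma_s H_x$, $K_{uu} := W_{uu} + \Sigma_u + H_u^\top \Sigma_s H_u$, the reduced matrix $\hat K_{uu} := Z^\top \begin{bmatrix} K_{xx} & K_{xu} \\ K_{ux} & K_{uu} \end{bmatrix} Z$ with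 $Z = \begin{bmatrix} -G_x^{-1} G_u \\ I \end{bmatrix}$, and the condensed right-hand sides $\hat r_1 := r_1^x + H_x^\top(\Sigma_s r_4 - r_2)$, $\hat r_2 := r_1^u + H_u^\top(\Sigma_s r_4 - r_2)$, $\hat r_3 := r_3$. Then $(p_x, p_u, p_s, p_y, p_z)$ satisfies the full augmented KKT system $(W_{xx}+\Sigma_x)p_x + W_{xu}p_u + G_x^\top p_y + H_x^\top p_z = -r_1^x$, $W_{ux}p_x + (W_{uu}+\Sigma_u)p_u + G_u^\top p_y + H_u^\top p_z = -r_1^u$, $\Sigma_s p_s + p_z = -r_2$, $G_x p_x + G_u p_u = -r_3$, $H_x p_x + H_u p_u + p_s = -r_4$, if and only if $\hat K_{uu}\, p_u = -\hat r_2 + G_u^\top G_x^{-\top} \hat r_1 + (K_{ux} - G_u^\top G_x^{-\top} K_{xx}) G_x^{-1} \hat r_3$, $p_x = -G_x^{-1}(\hat r_3 + G_u p_u)$, $p_y = -G_x^{-\top}(\hat r_1 + K_{xx} p_x + K_{xu} p_u)$, $p_z = \Sigma_s (H_x p_x + H_u p_u + r_4) - r_2$, and $p_s = -\Sigma_s^{-1}(r_2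 + p_z)$. -/
open Matrix

/-- Full condensation-and-reduction of the augmented interior-point KKT
system: eliminating slacks and inequality multipliers (condensation) and then
the state variables and equality multipliers (reduction via `Z`) is equivalent
to solving the dense reduced system `K̂uu pu = rhs`. -/
theorem condensed_reduced_kkt_system {nx nu m : ℕ}
    (Wxx Sx Gx : Matrix (Fin nx) (Fin nx) ℝ) (hGx : IsUnit Gx.det)
    (Wxu Gu : Matrix (Fin nx) (Fin nu) ℝ)
    (Wux : Matrix (Fin nu) (Fin nx) ℝ)
    (Wuu Su : Matrix (Fin nu) (Fin nu) ℝ)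
    (Hx : Matrix (Fin m) (Fin nx) ℝ)
    (Hu : Matrix (Fin m) (Fin nu) ℝ)
    (Ss : Matrix (Fin m) (Fin m) ℝ) (hSs : IsUnit Ss.det)
    (r1x : Fin nx → ℝ) (r1u : Fin nu → ℝ) (r2 r4 : Fin m → ℝ) (r3 : Fin nx → ℝ)
    (Kxx : Matrix (Fin nx) (Fin nx) ℝ) (hKxx : Kxx = Wxx + Sx + Hxᵀ * Ss * Hx)
    (Kxu : Matrix (Fin nx) (Fin nu) ℝ) (hKxu : Kxu = Wxu + Hxᵀ * Ss * Hu)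
    (Kux : Matrix (Fin nu) (Fin nx) ℝ) (hKux : Kux = Wux + Huᵀ * Ss * Hx)
    (Kuu : Matrix (Fin nu) (Fin nu) ℝ) (hKuu : Kuu = Wuu + Su + Huᵀ * Ss * Hu)
    (Z : Matrix (Fin nx ⊕ Fin nu) (Fin nu) ℝ)
    (hZ : Z = Matrix.fromRows (-(Gx⁻¹ * Gu)) 1)
    (Kuu_hat : Matrix (Fin nu) (Fin nu) ℝ)
    (hKuu_hat : Kuu_hat = Zᵀ * Matrix.fromBlocks Kxx Kxu Kux Kuu * Z)
    (r1_hat : Fin nx → ℝ) (hr1_hat : r1_hat = r1x + Hxᵀ *ᵥ (Ss *ᵥ r4 - r2))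
    (r2_hat : Fin nu → ℝ) (hr2_hat : r2_hat = r1u + Huᵀ *ᵥ (Ss *ᵥ r4 - r2))
    (r3_hat : Fin nx → ℝ) (hr3_hat : r3_hat = r3)
    (px : Fin nx → ℝ) (pu : Fin nu → ℝ) (ps : Fin m → ℝ)
    (py : Fin nx → ℝ) (pz : Fin m → ℝ) :
    ((Wxx + Sx) *ᵥ px + Wxu *ᵥ pu + Gxᵀ *ᵥ py + Hxᵀ *ᵥ pz = -r1x ∧
      Wux *ᵥ px + (Wuu + Su) *ᵥ pu + Guᵀ *ᵥ py + Huᵀ *ᵥ pz = -r1u ∧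
      Ss *ᵥ ps + pz = -r2 ∧
      Gx *ᵥ px + Gu *ᵥ pu = -r3 ∧
      Hx *ᵥ px + Hu *ᵥ pu + ps = -r4) ↔
    (Kuu_hat *ᵥ pu
        = -r2_hat + Guᵀ *ᵥ ((Gx⁻¹)ᵀ *ᵥ r1_hat)
          + (Kux - Guᵀ * (Gx⁻¹)ᵀ * Kxx) *ᵥ (Gx⁻¹ *ᵥ r3_hat) ∧
      px = -(Gx⁻¹ *ᵥ (r3_hat + Gu *ᵥ pu)) ∧
      py = -((Gx⁻¹)ᵀ *ᵥ (r1_hat + Kxx *ᵥ px + Kxu *ᵥ pu)) ∧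
      pz = Ss *ᵥ (Hx *ᵥ px + Hu *ᵥ pu + r4) - r2 ∧
      ps = -(Ss⁻¹ *ᵥ (r2 + pz))) := by
  subst hr3_hat
  have hGi : Gx⁻¹ * Gx = 1 := nonsing_inv_mul _ hGx
  have hGi' : Gx * Gx⁻¹ = 1 := mul_nonsing_inv _ hGx
  have hSi : Ss⁻¹ * Ss = 1 := nonsing_inv_mul _ hSs
  -- step 1: slack/inequality condensation
  have h45 : (Ss *ᵥ ps + pz = -r2 ∧ Hx *ᵥ px + Hu *ᵥ pu + ps = -r4) ↔
      (pz = Ss *ᵥ (Hx *ᵥ px + Hu *ᵥ pu + r4) - r2 ∧ ps = -(Ss⁻¹ *ᵥ (r2 + pz))) := by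
    constructor
    · rintro ⟨h3, h5⟩
      have e5 : Hx *ᵥ px + Hu *ᵥ pu + r4 = -ps := by linear_combination h5
      constructor
      · rw [e5, Matrix.mulVec_neg]; linear_combination h3
      · have e3 : r2 + pz = -(Ss *ᵥ ps) := by linear_combination h3
        rw [e3, Matrix.mulVec_neg, Matrix.mulVec_mulVec, hSi, Matrix.one_mulVec, neg_neg]
    · rintro ⟨hz, hs⟩
      have hps : ps = -(Hx *ᵥ px + Hu *ᵥ pu + r4) := by
        rw [hs, hz]
        have e : r2 + (Ss *ᵥ (Hx *ᵥ px + Hu *ᵥ pu + r4) - r2)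
            = Ss *ᵥ (Hx *ᵥ px + Hu *ᵥ pu + r4) := by ring
        rw [e, Matrix.mulVec_mulVec, hSi, Matrix.one_mulVec]
      have hSps := congrArg (Ss *ᵥ ·) hps
      simp only [Matrix.mulVec_neg] at hSps
      exact ⟨by linear_combination hSps + hz, by linear_combination hps⟩
  -- step 2: state elimination
  have h4iff : (Gx *ᵥ px + Gu *ᵥ pu = -r3_hat) ↔ (px = -(Gx⁻¹ *ᵥ (r3_hat + Gu *ᵥ pu))) := by
    constructor
    · intro h
      have e : Gx *ᵥ px = -(r3_hat + Gu *ᵥ pu) := by linear_combination h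
      calc px = (Gx⁻¹ * Gx) *ᵥ px := by rw [hGi, Matrix.one_mulVec]
        _ = -(Gx⁻¹ *ᵥ (r3_hat + Gu *ᵥ pu)) := by
            rw [← Matrix.mulVec_mulVec, e, Matrix.mulVec_neg]
    · intro h
      rw [h, Matrix.mulVec_neg, Matrix.mulVec_mulVec, hGi', Matrix.one_mulVec]; ring
  -- solving with Gxᵀ
  have solveGxT : ∀ (v w : Fin nx → ℝ), Gxᵀ *ᵥ v = w ↔ v = (Gx⁻¹)ᵀ *ᵥ w := by
    intro v w
    constructor
    · intro h
      rw [← h, Matrix.mulVec_mulVec, ← Matrix.transpose_mul, hGi', Matrix.transpose_one,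
        Matrix.one_mulVec]
    · intro h
      rw [h, Matrix.mulVec_mulVec, ← Matrix.transpose_mul, hGi, Matrix.transpose_one,
        Matrix.one_mulVec]
  -- step 3: condensation identities for rows 1 and 2, valid when pz is eliminated
  have key1 : pz = Ss *ᵥ (Hx *ᵥ px + Hu *ᵥ pu + r4) - r2 →
      (Wxx + Sx) *ᵥ px + Wxu *ᵥ pu + Gxᵀ *ᵥ py + Hxᵀ *ᵥ pz + r1x
        = Gxᵀ *ᵥ py + (r1_hat + Kxx *ᵥ px + Kxu *ᵥ pu) := by
    intro hz
    simp only [hz, hKxx, hKxu, hr1_hat, Matrix.add_mulVec, Matrix.mulVec_add,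
      Matrix.mulVec_sub, Matrix.mulVec_mulVec, Matrix.mul_assoc]
    abel
  have key2 : pz = Ss *ᵥ (Hx *ᵥ px + Hu *ᵥ pu + r4) - r2 →
      Wux *ᵥ px + (Wuu + Su) *ᵥ pu + Guᵀ *ᵥ py + Huᵀ *ᵥ pz + r1u
        = Guᵀ *ᵥ py + (r2_hat + Kux *ᵥ px + Kuu *ᵥ pu) := by
    intro hz
    simp only [hz, hKux, hKuu, hr2_hat, Matrix.add_mulVec, Matrix.mulVec_add,
      Matrix.mulVec_sub, Matrix.mulVec_mulVec, Matrix.mul_assoc]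
    abel
  -- step 4: reduction identity
  have key3 : px = -(Gx⁻¹ *ᵥ (r3_hat + Gu *ᵥ pu)) →
      py = -((Gx⁻¹)ᵀ *ᵥ (r1_hat + Kxx *ᵥ px + Kxu *ᵥ pu)) →
      Kux *ᵥ px + Kuu *ᵥ pu + Guᵀ *ᵥ py
        = Kuu_hat *ᵥ pu - Guᵀ *ᵥ ((Gx⁻¹)ᵀ *ᵥ r1_hat)
          - (Kux - Guᵀ * (Gx⁻¹)ᵀ * Kxx) *ᵥ (Gx⁻¹ *ᵥ r3_hat) := by
    intro hx hy
    simp only [hKuu_hat, hZ, Matrix.transpose_fromRows, Matrix.mul_assoc,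
      Matrix.fromBlocks_mul_fromRows, Matrix.fromCols_mul_fromRows,
      Matrix.transpose_neg, Matrix.transpose_mul, Matrix.transpose_one,
      Matrix.mul_one, Matrix.one_mul, Matrix.neg_mul, Matrix.mul_neg,
      Matrix.mul_add, Matrix.add_mul, hy, hx, Matrix.mulVec_neg, Matrix.mulVec_add,
      Matrix.mulVec_sub, Matrix.sub_mulVec, Matrix.add_mulVec, Matrix.neg_mulVec, Matrix.sub_mul,
      Matrix.mulVec_mulVec]
    abel
  constructor
  · rintro ⟨h1, h2, h3, h4, h5⟩
    obtain ⟨hz, hs⟩ := h45.mp ⟨h3, h5⟩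
    have hx := h4iff.mp h4
    have hy : py = -((Gx⁻¹)ᵀ *ᵥ (r1_hat + Kxx *ᵥ px + Kxu *ᵥ pu)) := by
      have e : Gxᵀ *ᵥ py = -(r1_hat + Kxx *ᵥ px + Kxu *ᵥ pu) := by
        linear_combination h1 - key1 hz
      rw [(solveGxT _ _).mp e, Matrix.mulVec_neg]
    refine ⟨?_, hx, hy, hz, hs⟩
    linear_combination h2 - key2 hz - key3 hx hy
  · rintro ⟨h1, hx, hy, hz, hs⟩
    obtain ⟨h3, h5⟩ := h45.mpr ⟨hz, hs⟩
    refine ⟨?_, ?_, h3, h4iff.mpr hx, h5⟩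
    · have e : Gxᵀ *ᵥ py = -(r1_hat + Kxx *ᵥ px + Kxu *ᵥ pu) := by
        rw [hy, Matrix.mulVec_neg, Matrix.mulVec_mulVec, ← Matrix.transpose_mul, hGi,
          Matrix.transpose_one, Matrix.one_mulVec]
      linear_combination key1 hz + e
    · linear_combination key2 hz + key3 hx hy + h1
end
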